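/- arXiv:2101.01095 — 2 statements merged into one kernel-verified Lean document; each statement's English description precedes it below -/
import Mathlib

section
/- If the macroscopic displacement field is linear, u(x) = s·x for a constant s, then the peridynamic stress at the origin, defined as σ = ∫₀^∞ ∫₀^∞ ω(r+t)(u(r) − u(−t)) dt dr, equals s · ∫₀^∞ ξ² ω(ξ) dξ. -/
/-!
For a linear displacement the bond force is `s (r + t) ω (r + t)`, a function of the bond length
`ξ = r + t` alone. Substituting `ξ = r + t` turns the inner integral into the tail
`∫_r^∞ ξ ω(ξ) dξ`, and by Fubini a bond of length `ξ` is counted once for every `r ∈ (0, ξ)`,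
which produces the second moment `∫_0^∞ ξ² ω(ξ) dξ`.
-/

open MeasureTheory Set

variable {E : Type*} [NormedAddCommGroup E] [NormedSpace ℝ E]

theorem setIntegral_Ioi_zero_comp_add_left (g : ℝ → E) (r : ℝ) :
    ∫ t in Ioi 0, g (r + t) = ∫ ξ in Ioi r, g ξ := by
  simpa using (measurePreserving_add_left volume r).setIntegral_preimage_emb
    (measurableEmbedding_addLeft r) g (Ioi r)

theorem setIntegral_Ioi_zero_indicator_Iio_const [CompleteSpace E] (e : E) {ξ : ℝ} (hξ : 0 ≤ ξ) :
    ∫ r in Ioi 0, (Iio ξ).indicator (fun _ => e) r = ξ • e := by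
  rw [setIntegral_indicator measurableSet_Iio, Ioi_inter_Iio, setIntegral_const,
    Real.volume_real_Ioo_of_le hξ, sub_zero]

theorem integrable_indicator_lt_prod_restrict_Ioi {g : ℝ → E} (hg : StronglyMeasurable g)
    (hint : IntegrableOn (fun ξ => ξ • g ξ) (Ioi 0)) :
    Integrable ({p : ℝ × ℝ | p.1 < p.2}.indicator fun p => g p.2)
      ((volume.restrict (Ioi 0)).prod (volume.restrict (Ioi 0))) := by
  have hmeas : StronglyMeasurable ({p : ℝ × ℝ | p.1 < p.2}.indicator fun p => g p.2) :=
    (hg.comp_measurable measurable_snd).indicator (measurableSet_lt measurable_fst measurable_snd)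
  refine (integrable_prod_iff' hmeas.aestronglyMeasurable).2 ⟨?_, ?_⟩
  · refine ae_of_all _ fun ξ => ?_
    change Integrable ((Iio ξ).indicator fun _ => g ξ) _
    refine (integrable_indicator_iff measurableSet_Iio).2 (integrableOn_const ?_)
    rw [Measure.restrict_apply measurableSet_Iio, inter_comm, Ioi_inter_Iio]
    exact measure_Ioo_lt_top.ne
  · refine IntegrableOn.congr_fun hint.norm (fun ξ (hξ : 0 < ξ) => ?_) measurableSet_Ioi
    change ‖ξ • g ξ‖ = ∫ r in Ioi 0, ‖(Iio ξ).indicator (fun _ => g ξ) r‖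
    simp_rw [norm_indicator_eq_indicator_norm]
    rw [setIntegral_Ioi_zero_indicator_Iio_const _ hξ.le, norm_smul, Real.norm_of_nonneg hξ.le,
      smul_eq_mul]

theorem setIntegral_Ioi_zero_setIntegral_Ioi_eq_smul [CompleteSpace E] {g : ℝ → E}
    (hg : StronglyMeasurable g) (hint : IntegrableOn (fun ξ => ξ • g ξ) (Ioi 0)) :
    ∫ r in Ioi 0, ∫ ξ in Ioi r, g ξ = ∫ ξ in Ioi 0, ξ • g ξ := by
  have htail : ∀ r, 0 < r → ∫ ξ in Ioi r, g ξ = ∫ ξ in Ioi 0, (Ioi r).indicator g ξ := by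
    intro r hr
    rw [setIntegral_indicator measurableSet_Ioi, Ioi_inter_Ioi, max_eq_right hr.le]
  calc ∫ r in Ioi 0, ∫ ξ in Ioi r, g ξ
      = ∫ r in Ioi 0, ∫ ξ in Ioi 0, {p : ℝ × ℝ | p.1 < p.2}.indicator (fun p => g p.2) (r, ξ) :=
        setIntegral_congr_fun measurableSet_Ioi htail
    _ = ∫ ξ in Ioi 0, ∫ r in Ioi 0, (Iio ξ).indicator (fun _ => g ξ) r :=
        integral_integral_swap (integrable_indicator_lt_prod_restrict_Ioi hg hint)
    _ = ∫ ξ in Ioi 0, ξ • g ξ :=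
        setIntegral_congr_fun measurableSet_Ioi fun ξ hξ =>
          setIntegral_Ioi_zero_indicator_Iio_const _ (le_of_lt hξ)

/-- For a linear displacement `u(x) = s·x`, the peridynamic stress at the
origin, summing bond forces over all bonds crossing `0`, equals
`s · ∫₀^∞ ξ² ω(ξ) dξ`. -/
theorem stmt_2 (ω : ℝ → ℝ) (hmeas : Measurable ω)
    (hint : IntegrableOn (fun ξ => ξ ^ 2 * |ω ξ|) (Set.Ioi (0 : ℝ)) volume)
    (s : ℝ) (u : ℝ → ℝ) (hu : ∀ x, u x = s * x) :
    (∫ r in Set.Ioi (0 : ℝ), ∫ t in Set.Ioi (0 : ℝ), ω (r + t) * (u r - u (-t)))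
      = s * ∫ ξ in Set.Ioi (0 : ℝ), ξ ^ 2 * ω ξ := by
  have hforce : ∀ r t, ω (r + t) * (u r - u (-t)) = s * ((r + t) * ω (r + t)) := by
    intro r t
    rw [hu, hu]
    ring
  have htranslate : ∀ r, ∫ t in Ioi 0, (r + t) * ω (r + t) = ∫ ξ in Ioi r, ξ * ω ξ :=
    setIntegral_Ioi_zero_comp_add_left (fun ξ => ξ * ω ξ)
  have hmoment : IntegrableOn (fun ξ => ξ • (ξ * ω ξ)) (Ioi 0) := by
    refine (integrable_norm_iff (by fun_prop)).1 (hint.congr_fun (fun ξ _ => ?_) measurableSet_Ioi)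
    simp only [smul_eq_mul, norm_mul, Real.norm_eq_abs, ← mul_assoc, abs_mul_abs_self, sq]
  simp_rw [hforce, integral_const_mul, htranslate]
  rw [setIntegral_Ioi_zero_setIntegral_Ioi_eq_smul
    (by fun_prop : Measurable fun ξ => ξ * ω ξ).stronglyMeasurable hmoment]
  simp_rw [smul_eq_mul, ← mul_assoc, ← sq]
end

section
/- Let ω : ℝ → ℝ be even, integrable, with ξ²ω(ξ) integrable, and suppose u : ℝ → ℝ is four times continuously differentiable with bounded fourth derivative. Then for the rescaled kernel ω_ε(ξ) = ε^{-3} ω(ξ/ε) supported in [−ε,ε], the nonlocal operator L_{ω_ε}[u](x) = ∫_{−ε}^{ε} ω_ε(ξ)(u(x+ξ) − u(x)) dξ converges as ε → 0 to C u''(x), where C = (1/2)∫_{−1}^{1} ξ² ω(ξ) dξ. -/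
/-!
Substituting `ξ = εη` turns `L_{ω_ε}[u](x)` into `∫_{-1}^{1} ω(η) (u(x+εη) - u(x)) / ε² dη`.
Expanding `u` to second order at `x`, the first-order term `ε⁻¹ u'(x) ∫ η ω(η)` vanishes because
`ω` is even, the second-order term is exactly `C u''(x)`, and the Taylor remainder is `o(ε²η²)`
uniformly in `|η| ≤ 1`, so its contribution is `o(1) ∫ |ω|`.
-/

open MeasureTheory Filter Topology Asymptotics Set

theorem taylorWithinEval_two_univ (f : ℝ → ℝ) (x₀ x : ℝ) :
    taylorWithinEval f 2 univ x₀ x =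
      f x₀ + (x - x₀) * deriv f x₀ + (x - x₀) ^ 2 / 2 * deriv (deriv f) x₀ := by
  simp only [taylor_within_apply, Finset.sum_range_succ, Finset.sum_range_zero,
    iteratedDerivWithin_univ, iteratedDeriv_zero, iteratedDeriv_succ, smul_eq_mul,
    Nat.factorial, Nat.cast_one]
  ring

theorem ContDiff.isLittleO_sub_taylorWithinEval {E : Type*} [NormedAddCommGroup E]
    [NormedSpace ℝ E] {f : ℝ → E} {n : ℕ} (hf : ContDiff ℝ n f) (x : ℝ) :
    (fun h => f (x + h) - taylorWithinEval f n univ x (x + h)) =o[𝓝 0] fun h => h ^ n := by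
  have hx : Tendsto (x + ·) (𝓝 0) (𝓝 x) := by
    simpa using (continuous_const_add x).tendsto 0
  simpa [Function.comp_def] using (taylor_isLittleO_univ hf).comp_tendsto hx

theorem intervalIntegral.integral_neg_self_eq_zero_of_odd {E : Type*} [NormedAddCommGroup E]
    [NormedSpace ℝ E] {f : ℝ → E} (hf : ∀ x, f (-x) = -f x) (a : ℝ) :
    ∫ x in -a..a, f x = 0 := by
  have h := intervalIntegral.integral_comp_neg (a := -a) (b := a) f
  simp only [hf, intervalIntegral.integral_neg, neg_neg] at h
  have h2 : (2 : ℝ) • ∫ x in -a..a, f x = 0 := by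
    rw [two_smul]
    nth_rewrite 1 [← h]
    exact neg_add_cancel _
  exact (smul_eq_zero.mp h2).resolve_left two_ne_zero

theorem setIntegral_Icc_comp_div {E : Type*} [NormedAddCommGroup E] [NormedSpace ℝ E]
    (f : ℝ → E) {ε : ℝ} (hε : 0 < ε) :
    ∫ ξ in Icc (-ε) ε, f (ξ / ε) = ε • ∫ η in Icc (-1) 1, f η := by
  rw [integral_Icc_eq_integral_Ioc, integral_Icc_eq_integral_Ioc,
    ← intervalIntegral.integral_of_le (by linarith), ← intervalIntegral.integral_of_le (by norm_num),
    intervalIntegral.integral_comp_div f hε.ne', neg_div, div_self hε.ne']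

theorem tendsto_setIntegral_mul_div_sq_of_isLittleO {ω g : ℝ → ℝ}
    (hω : IntegrableOn ω (Icc (-1) 1)) (hg : g =o[𝓝 0] fun h => h ^ 2) :
    Tendsto (fun ε => ∫ η in Icc (-1) 1, ω η * (g (ε * η) / ε ^ 2)) (𝓝 0) (𝓝 0) := by
  rw [← isLittleO_one_iff ℝ]
  refine IsLittleO.trans_isBigO ?_ (isBigO_const_one ℝ (∫ η in Icc (-1) 1, |ω η|) _)
  refine isLittleO_iff.mpr fun c hc => ?_
  obtain ⟨ρ, hρ, hgρ⟩ := Metric.eventually_nhds_iff.mp (isLittleO_iff.mp hg hc)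
  filter_upwards [Metric.ball_mem_nhds 0 hρ] with ε hε
  have hbound : ∀ η ∈ Icc (-1 : ℝ) 1, ‖ω η * (g (ε * η) / ε ^ 2)‖ ≤ c * |ω η| := by
    intro η hη
    have hη : |η| ≤ 1 := abs_le.mpr hη
    have hεη : dist (ε * η) 0 < ρ := by
      rw [Real.dist_eq, sub_zero, abs_mul]
      exact (mul_le_of_le_one_right (abs_nonneg ε) hη).trans_lt (by simpa using hε)
    have hquot : |g (ε * η)| / ε ^ 2 ≤ c := by
      refine div_le_of_le_mul₀ (sq_nonneg ε) hc.le ?_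
      have hεη2 : (ε * η) ^ 2 ≤ ε ^ 2 := by
        rw [mul_pow]
        exact mul_le_of_le_one_right (sq_nonneg ε) (by nlinarith [sq_abs η, abs_nonneg η])
      calc |g (ε * η)| ≤ c * (ε * η) ^ 2 := by simpa [mul_pow, sq_abs] using hgρ hεη
        _ ≤ c * ε ^ 2 := mul_le_mul_of_nonneg_left hεη2 hc.le
    rw [norm_mul, norm_div, Real.norm_eq_abs, Real.norm_eq_abs, Real.norm_eq_abs,
      abs_of_nonneg (sq_nonneg ε), mul_comm c]
    exact mul_le_mul_of_nonneg_left hquot (abs_nonneg _)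
  calc ‖∫ η in Icc (-1) 1, ω η * (g (ε * η) / ε ^ 2)‖
      ≤ ∫ η in Icc (-1) 1, c * |ω η| :=
        norm_integral_le_of_norm_le (hω.abs.const_mul c)
          ((ae_restrict_iff' measurableSet_Icc).mpr (.of_forall hbound))
    _ = c * ‖∫ η in Icc (-1) 1, |ω η|‖ := by
        rw [integral_const_mul, Real.norm_of_nonneg (integral_nonneg fun _ => abs_nonneg _)]

theorem setIntegral_rescaled_eq (ω u : ℝ → ℝ) (x : ℝ) {ε : ℝ} (hε : 0 < ε) :
    ∫ ξ in Icc (-ε) ε, (ε ^ 3)⁻¹ * ω (ξ / ε) * (u (x + ξ) - u x) =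
      ∫ η in Icc (-1) 1, ω η * ((u (x + ε * η) - u x) / ε ^ 2) := by
  have h := setIntegral_Icc_comp_div (fun η => (ε ^ 3)⁻¹ * ω η * (u (x + ε * η) - u x)) hε
  simp only [mul_div_cancel₀ _ hε.ne'] at h
  rw [h, smul_eq_mul, ← integral_const_mul]
  congr 1 with η
  field_simp

theorem setIntegral_mul_sub_div_sq_eq_of_even {ω u : ℝ → ℝ} (heven : ∀ ξ, ω (-ξ) = ω ξ)
    (hω : IntegrableOn ω (Icc (-1) 1)) (hu : Continuous u) (x : ℝ) {ε : ℝ} (hε : ε ≠ 0) :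
    ∫ η in Icc (-1) 1, ω η * ((u (x + ε * η) - u x) / ε ^ 2) =
      (∫ η in Icc (-1) 1,
          ω η * ((u (x + ε * η) - taylorWithinEval u 2 univ x (x + ε * η)) / ε ^ 2)) +
        (1 / 2 * ∫ η in Icc (-1) 1, η ^ 2 * ω η) * deriv (deriv u) x := by
  simp only [taylorWithinEval_two_univ, add_sub_cancel_left]
  have hsplit : (fun η => ω η * ((u (x + ε * η) - u x) / ε ^ 2)) = fun η =>
      (ω η * ((u (x + ε * η) - (u x + ε * η * deriv u x +
        (ε * η) ^ 2 / 2 * deriv (deriv u) x)) / ε ^ 2) + deriv u x / ε * (η * ω η)) +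
        deriv (deriv u) x / 2 * (η ^ 2 * ω η) := by
    ext η
    field_simp
    ring
  have hodd : ∫ η in Icc (-1 : ℝ) 1, η * ω η = 0 := by
    rw [integral_Icc_eq_integral_Ioc, ← intervalIntegral.integral_of_le (by norm_num)]
    exact intervalIntegral.integral_neg_self_eq_zero_of_odd (fun η => by rw [heven]; ring) 1
  have hrem : IntegrableOn (fun η => ω η * ((u (x + ε * η) - (u x + ε * η * deriv u x +
      (ε * η) ^ 2 / 2 * deriv (deriv u) x)) / ε ^ 2)) (Icc (-1) 1) :=
    hω.mul_continuousOn (by fun_prop) isCompact_Icc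
  have hmoment (k : ℕ) : IntegrableOn (fun η => η ^ k * ω η) (Icc (-1) 1) :=
    hω.continuousOn_mul (by fun_prop) isCompact_Icc
  have hlin : IntegrableOn (fun η => deriv u x / ε * (η * ω η)) (Icc (-1) 1) := by
    have h := (hmoment 1).const_mul (deriv u x / ε)
    simp only [pow_one] at h
    exact h
  rw [hsplit, integral_add (Integrable.fun_add hrem hlin) ((hmoment 2).const_mul _),
    integral_add hrem hlin, integral_const_mul, integral_const_mul, hodd]
  ring

theorem stmt_5_general (ω : ℝ → ℝ)
    (heven : ∀ ξ, ω (-ξ) = ω ξ)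
    (hint : MeasureTheory.IntegrableOn ω (Set.Icc (-1 : ℝ) 1) volume)
    (u : ℝ → ℝ) (hu : ContDiff ℝ 4 u)
    (x : ℝ) :
    Filter.Tendsto
      (fun ε : ℝ =>
        ∫ ξ in Set.Icc (-ε) ε, (ε ^ 3)⁻¹ * ω (ξ / ε) * (u (x + ξ) - u x))
      (nhdsWithin 0 (Set.Ioi 0))
      (nhds (((1 / 2) * ∫ ξ in Set.Icc (-1 : ℝ) 1, ξ ^ 2 * ω ξ) * deriv (deriv u) x)) := by
  have hremainder := tendsto_setIntegral_mul_div_sq_of_isLittleO hint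
    ((hu.of_le (by norm_num) : ContDiff ℝ (2 : ℕ) u).isLittleO_sub_taylorWithinEval x)
  have hlimit := (hremainder.mono_left (nhdsWithin_le_nhds (s := Ioi 0))).add_const
    ((1 / 2 * ∫ ξ in Icc (-1 : ℝ) 1, ξ ^ 2 * ω ξ) * deriv (deriv u) x)
  rw [zero_add] at hlimit
  refine hlimit.congr' ?_
  filter_upwards [self_mem_nhdsWithin] with ε (hε : 0 < ε)
  rw [setIntegral_rescaled_eq _ _ _ hε,
    setIntegral_mul_sub_div_sq_eq_of_even heven hint hu.continuous x hε.ne']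

/-- For an even integrable kernel `ω` with `ξ²ω(ξ)` integrable on `[−1,1]` and
`u ∈ C⁴` with bounded fourth derivative, the rescaled nonlocal operator
`L_{ω_ε}[u](x) = ∫_{−ε}^{ε} ε⁻³ ω(ξ/ε)(u(x+ξ) − u(x)) dξ` converges as
`ε → 0⁺` to `C u''(x)` with `C = (1/2)∫_{−1}^{1} ξ² ω(ξ) dξ`. -/
theorem stmt_5 (ω : ℝ → ℝ)
    (heven : ∀ ξ, ω (-ξ) = ω ξ)
    (hint : MeasureTheory.IntegrableOn ω (Set.Icc (-1 : ℝ) 1) volume)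
    (hint2 : MeasureTheory.IntegrableOn (fun ξ => ξ ^ 2 * ω ξ) (Set.Icc (-1 : ℝ) 1) volume)
    (u : ℝ → ℝ) (hu : ContDiff ℝ 4 u)
    (hbdd : ∃ M : ℝ, ∀ x, |iteratedDeriv 4 u x| ≤ M)
    (x : ℝ) :
    Filter.Tendsto
      (fun ε : ℝ =>
        ∫ ξ in Set.Icc (-ε) ε, (ε ^ 3)⁻¹ * ω (ξ / ε) * (u (x + ξ) - u x))
      (nhdsWithin 0 (Set.Ioi 0))
      (nhds (((1 / 2) * ∫ ξ in Set.Icc (-1 : ℝ) 1, ξ ^ 2 * ω ξ) * deriv (deriv u) x)) :=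
  stmt_5_general ω heven hint u hu x
end
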